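/- arXiv:2407.08904 — 3 statements merged into one kernel-verified Lean document; each statement's English description precedes it below -/
import Mathlib

section
/- If M is an R-proximally smooth closed subset of a Euclidean space (i.e., the nearest-point projection P_M is single-valued on the open R-tube around M), then for any γ ∈ (0, R), the projection P_M is Lipschitz continuous with constant R/(R−γ) on the closed γ-tube {x : dist(x, M) ≤ γ}. -/
/-!
The heart of the proof is the proximal normal inequality
`⟪x - P x, b - P x⟫ ≤ d(x) / (2R) * ‖b - P x‖²` for `b ∈ M` and `d(x) < R`.
Single-valuedness of the projection on a proper space makes `P`, hence the unit normal
`(x - P x) / d(x)`, continuous. Following the normal in short Euler steps, uniform continuity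
lets `d` grow at almost unit rate, so for `d(x) < r < R` some point `y` with
`‖y - x‖ ≤ r - d(x)` has `d(y) = r`. Equality in the triangle inequality puts `y` on the ray
from `P x` through `x`, and the ball of radius `r` about `y` misses `M`: this is the inequality
with `r` in place of `R`. Adding the inequalities at `x` (with `b = P y`) and at `y`
(with `b = P x`) gives `(1 - γ/R) ‖P x - P y‖² ≤ ⟪x - y, P x - P y⟫`.
-/

open Metric Filter
open scoped RealInnerProductSpace Topology

theorem exists_nat_mul_eq_and_lt {t δ₁ : ℝ} (ht : 0 ≤ t) (hδ₁ : 0 < δ₁) :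
    ∃ (n : ℕ) (δ : ℝ), 0 ≤ δ ∧ δ < δ₁ ∧ n * δ = t := by
  obtain ⟨n, hn⟩ := exists_nat_gt (t / δ₁)
  have hn0 : (0 : ℝ) < n := (div_nonneg ht hδ₁.le).trans_lt hn
  refine ⟨n, t / n, by positivity, ?_, mul_div_cancel₀ t hn0.ne'⟩
  rwa [div_lt_iff₀ hn0, mul_comm, ← div_lt_iff₀ hδ₁]

theorem exists_dist_le_and_le_of_steps {X : Type*} [PseudoMetricSpace X] {f : X → ℝ} {x : X}
    {δ a : ℝ} (n : ℕ) (step : ∀ k < n, ∀ y, dist y x ≤ k * δ → f x + k * a ≤ f y →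
      ∃ y', dist y' y ≤ δ ∧ f y + a ≤ f y') :
    ∃ y, dist y x ≤ n * δ ∧ f x + n * a ≤ f y := by
  induction n with
  | zero => exact ⟨x, by simp⟩
  | succ n ih =>
    obtain ⟨y, hyx, hfy⟩ := ih fun k hk => step k (hk.trans n.lt_succ_self)
    obtain ⟨y', hy'y, hfy'⟩ := step n n.lt_succ_self y hyx hfy
    refine ⟨y', ?_, ?_⟩
    · calc dist y' x ≤ dist y' y + dist y x := dist_triangle _ _ _
        _ ≤ (n + 1 : ℕ) * δ := by push_cast; linarith
    · push_cast; linarith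

theorem infDist_lt_of_mem_closedBall {X : Type*} [PseudoMetricSpace X] {s : Set X} {x y : X}
    {t R : ℝ} (hxt : infDist x s + t < R) (hy : y ∈ closedBall x t) : infDist y s < R := by
  linarith [infDist_le_infDist_add_dist (s := s) (x := y) (y := x), mem_closedBall.1 hy]

section InnerProduct

variable {E : Type*} [NormedAddCommGroup E] [InnerProductSpace ℝ E]

theorem two_inner_le_norm_sq_of_norm_le_norm_sub {w e : E} (h : ‖w‖ ≤ ‖w - e‖) :
    2 * ⟪w, e⟫ ≤ ‖e‖ ^ 2 := by
  have := pow_le_pow_left₀ (norm_nonneg w) h 2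
  rw [norm_sub_sq_real] at this
  linarith

theorem norm_le_div_mul_of_mul_sq_le_inner {u w : E} {a b : ℝ} (ha : 0 < a) (hb : 0 ≤ b)
    (h : a * ‖w‖ ^ 2 ≤ b * ⟪u, w⟫) : ‖w‖ ≤ b / a * ‖u‖ := by
  have hcs : a * ‖w‖ ^ 2 ≤ b * ‖u‖ * ‖w‖ := by
    nlinarith [real_inner_le_norm u w]
  rw [div_mul_eq_mul_div, le_div_iff₀ ha]
  rcases (norm_nonneg w).eq_or_lt with hw | hw
  · rw [← hw, zero_mul]; positivity
  · nlinarith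

end InnerProduct

def IsNearestPointMap {X : Type*} [MetricSpace X] (M : Set X) (R : ℝ) (P : X → X) : Prop :=
  ∀ x, infDist x M < R →
    P x ∈ M ∧ dist (P x) x = infDist x M ∧ ∀ y ∈ M, dist y x = infDist x M → y = P x

noncomputable def unitNormal {E : Type*} [NormedAddCommGroup E] [NormedSpace ℝ E] (M : Set E)
    (P : E → E) (x : E) : E :=
  (infDist x M)⁻¹ • (x - P x)

namespace IsNearestPointMap

section Metric

variable {X : Type*} [MetricSpace X] {M : Set X} {R : ℝ} {P : X → X} {x y : X}

theorem mem (h : IsNearestPointMap M R P) (hx : infDist x M < R) : P x ∈ M := (h x hx).1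

theorem dist_eq (h : IsNearestPointMap M R P) (hx : infDist x M < R) :
    dist (P x) x = infDist x M := (h x hx).2.1

theorem eq_of_mem (h : IsNearestPointMap M R P) (hx : infDist x M < R) (hy : y ∈ M)
    (hyx : dist y x = infDist x M) : y = P x := (h x hx).2.2 y hy hyx

theorem isClosed (h : IsNearestPointMap M R P) (hR : 0 < R) : IsClosed M := by
  refine closure_subset_iff_isClosed.1 fun x hx => ?_
  have h0 := infDist_zero_of_mem_closure hx
  have hPx : P x = x := dist_eq_zero.1 (h0 ▸ h.dist_eq (h0 ▸ hR))
  exact hPx ▸ h.mem (h0 ▸ hR)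

theorem continuousAt [ProperSpace X] (h : IsNearestPointMap M R P) (hx : infDist x M < R) :
    ContinuousAt P x := by
  have hM := h.isClosed (infDist_nonneg.trans_lt hx)
  have hnear : ∀ᶠ y in 𝓝 x, infDist y M < R :=
    (isOpen_lt (continuous_infDist_pt M) continuous_const).mem_nhds hx
  have hbound : ∀ᶠ y in 𝓝 x, dist (P y) x ≤ infDist x M + 2 * dist y x := by
    filter_upwards [hnear] with y hy
    calc dist (P y) x ≤ dist (P y) y + dist y x := dist_triangle _ _ _
      _ = infDist y M + dist y x := by rw [h.dist_eq hy]
      _ ≤ infDist x M + 2 * dist y x := by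
        linarith [infDist_le_infDist_add_dist (s := M) (x := y) (y := x)]
  refine (isCompact_closedBall x (R + 2)).inter_left hM |>.tendsto_nhds_of_unique_mapClusterPt
    ?_ fun q hq hcl => h.eq_of_mem hx hq.1 (le_antisymm ?_ ?_)
  · filter_upwards [hnear, hbound, ball_mem_nhds x one_pos] with y hy hPy hyx
    refine ⟨h.mem hy, mem_closedBall.2 ?_⟩
    linarith [mem_ball.1 hyx]
  · refine le_of_forall_pos_le_add fun ε hε => ?_
    refine mem_closedBall.1 <| isClosed_closedBall.mem_of_mapClusterPt hcl ?_
    filter_upwards [hbound, ball_mem_nhds x (half_pos hε)] with y hPy hyx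
    exact mem_closedBall.2 (by linarith [mem_ball.1 hyx])
  · rw [dist_comm]; exact infDist_le_dist_of_mem hq.1

end Metric

section Normed

variable {E : Type*} [NormedAddCommGroup E] {M : Set E} {R : ℝ} {P : E → E} {x : E}

theorem norm_sub_eq (h : IsNearestPointMap M R P) (hx : infDist x M < R) :
    ‖x - P x‖ = infDist x M := by
  rw [← dist_eq_norm, dist_comm, h.dist_eq hx]

theorem norm_unitNormal [NormedSpace ℝ E] (h : IsNearestPointMap M R P) (hx0 : infDist x M ≠ 0)
    (hx : infDist x M < R) : ‖unitNormal M P x‖ = 1 := by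
  rw [unitNormal, norm_smul, h.norm_sub_eq hx, norm_inv, Real.norm_of_nonneg infDist_nonneg,
    inv_mul_cancel₀ hx0]

theorem continuousAt_unitNormal [NormedSpace ℝ E] [ProperSpace E] (h : IsNearestPointMap M R P)
    (hx0 : infDist x M ≠ 0) (hx : infDist x M < R) : ContinuousAt (unitNormal M P) x :=
  (((continuous_infDist_pt M).continuousAt.inv₀ hx0).smul
    (continuousAt_id.sub (h.continuousAt hx)))

theorem uniformContinuousOn_unitNormal [NormedSpace ℝ E] [ProperSpace E]
    (h : IsNearestPointMap M R P) {c t : ℝ} (hc : 0 < c) (hxt : infDist x M + t < R) :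
    UniformContinuousOn (unitNormal M P) (closedBall x t ∩ {y | c ≤ infDist y M}) := by
  refine IsCompact.uniformContinuousOn_of_continuous ?_ fun y hy => ?_
  · exact (isCompact_closedBall x t).inter_right
      (isClosed_le continuous_const (continuous_infDist_pt M))
  · exact (h.continuousAt_unitNormal (hc.trans_le hy.2).ne'
      (infDist_lt_of_mem_closedBall hxt hy.1)).continuousWithinAt

end Normed

variable {E : Type*} [NormedAddCommGroup E] [InnerProductSpace ℝ E] {M : Set E} {R : ℝ}
  {P : E → E} {x y b : E}

/- `d(z) ≤ ‖(z - y) + d(y) ν‖`, and `√(η² + B) ≤ η + B / (2η)`. -/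
theorem infDist_le_add_inner_unitNormal (h : IsNearestPointMap M R P) (hy0 : 0 < infDist y M)
    (hy : infDist y M < R) (z : E) :
    infDist z M ≤
      infDist y M + ⟪unitNormal M P y, z - y⟫ + ‖z - y‖ ^ 2 / (2 * infDist y M) := by
  set η := infDist y M
  set ν := unitNormal M P y
  have hν : ‖ν‖ = 1 := h.norm_unitNormal hy0.ne' hy
  have hsplit : z - P y = (z - y) + η • ν := by
    rw [show η • ν = y - P y from smul_inv_smul₀ hy0.ne' _]; abel
  have hsq : ‖z - P y‖ ^ 2 = ‖z - y‖ ^ 2 + 2 * η * ⟪ν, z - y⟫ + η ^ 2 := by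
    rw [hsplit, norm_add_sq_real, real_inner_smul_right, norm_smul, Real.norm_of_nonneg hy0.le, hν,
      real_inner_comm]
    ring
  have hcs : |⟪ν, z - y⟫| ≤ ‖z - y‖ := by
    simpa [hν] using abs_real_inner_le_norm ν (z - y)
  set q := ‖z - y‖ ^ 2 / (2 * η)
  have hq : ‖z - y‖ ^ 2 = 2 * η * q := by simp only [q]; field_simp
  have hT : 0 ≤ η + ⟪ν, z - y⟫ + q := by
    have : 0 ≤ η * (η + ⟪ν, z - y⟫ + q) := by
      nlinarith [abs_le.1 hcs, sq_nonneg (η - ‖z - y‖), norm_nonneg (z - y)]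
    exact nonneg_of_mul_nonneg_right (by linarith) hy0
  calc infDist z M ≤ ‖z - P y‖ := by
        rw [← dist_eq_norm]; exact infDist_le_dist_of_mem (h.mem hy)
    _ ≤ η + ⟪ν, z - y⟫ + q := by
        refine (pow_le_pow_iff_left₀ (norm_nonneg _) hT two_ne_zero).1 ?_
        rw [hsq, hq]; nlinarith [sq_nonneg (⟪ν, z - y⟫ + q)]

theorem infDist_add_le_infDist_add_smul (h : IsNearestPointMap M R P) {δ ρ c : ℝ}
    (hy0 : 0 < infDist y M) (hy : infDist y M < R)
    (hy'R : infDist (y + δ • unitNormal M P y) M < R) (hc : 0 < c)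
    (hcy' : c ≤ infDist (y + δ • unitNormal M P y) M) (hδ : 0 ≤ δ)
    (hρ : ‖unitNormal M P (y + δ • unitNormal M P y) - unitNormal M P y‖ ≤ ρ) :
    infDist y M + δ * (1 - ρ) - δ ^ 2 / (2 * c) ≤ infDist (y + δ • unitNormal M P y) M := by
  set ν := unitNormal M P y
  set y' := y + δ • ν
  set ν' := unitNormal M P y'
  have hy'0 : 0 < infDist y' M := hc.trans_le hcy'
  have hν : ‖ν‖ = 1 := h.norm_unitNormal hy0.ne' hy
  have hstep : y - y' = -(δ • ν) := by simp only [y']; abel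
  have hquad := h.infDist_le_add_inner_unitNormal hy'0 hy'R y
  rw [hstep, inner_neg_right, real_inner_smul_right, norm_neg, norm_smul,
    Real.norm_of_nonneg hδ, hν, mul_one] at hquad
  have hinner : 1 - ρ ≤ ⟪ν', ν⟫ := by
    have hsplit : ⟪ν', ν⟫ = ‖ν‖ ^ 2 + ⟪ν' - ν, ν⟫ := by
      rw [inner_sub_left, real_inner_self_eq_norm_sq]; ring
    have := real_inner_le_norm (ν' - ν) (-ν)
    rw [inner_neg_right, norm_neg, hν, mul_one] at this
    rw [hsplit, hν]; linarith
  have hquad' : δ ^ 2 / (2 * infDist y' M) ≤ δ ^ 2 / (2 * c) := by gcongr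
  nlinarith [mul_le_mul_of_nonneg_left hinner hδ]

/- Euler steps of length `δ` along the unit normal. Every iterate stays in `K`, where `d ≥ c`,
and `δ ≤ θ c` bounds the quadratic error `δ² / (2c)` of each step by `θ δ / 2`. -/
theorem exists_dist_le_and_le_infDist [ProperSpace E] (h : IsNearestPointMap M R P) {t θ : ℝ}
    (hx : 0 < infDist x M) (ht : 0 ≤ t) (hxt : infDist x M + t < R) (hθ : 0 < θ)
    (hθ1 : θ < 1) : ∃ y, dist y x ≤ t ∧ infDist x M + (1 - θ) * t ≤ infDist y M := by
  set c := infDist x M / 2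
  have hc : 0 < c := half_pos hx
  have hxc : infDist x M = 2 * c := by ring
  set K := closedBall x t ∩ {y | c ≤ infDist y M}
  have hK : ∀ y ∈ K, 0 < infDist y M ∧ infDist y M < R := fun y hy =>
    ⟨hc.trans_le hy.2, infDist_lt_of_mem_closedBall hxt hy.1⟩
  obtain ⟨δ₀, hδ₀, hν⟩ := Metric.uniformContinuousOn_iff.1
    (h.uniformContinuousOn_unitNormal hc hxt) (θ / 2) (half_pos hθ)
  obtain ⟨n, δ, hδ, hδmin, hnδ⟩ :=
    exists_nat_mul_eq_and_lt ht (lt_min hδ₀ (mul_pos hθ hc))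
  have hδθ : δ ≤ θ * c := hδmin.le.trans (min_le_right _ _)
  obtain ⟨y, hyx, hfy⟩ := exists_dist_le_and_le_of_steps (f := fun y => infDist y M) (x := x)
    (δ := δ) (a := (1 - θ) * δ) n fun k hk y hyx hfy => by
      have hkδ : (k + 1 : ℝ) * δ ≤ t := by
        rw [← hnδ]; gcongr; exact_mod_cast hk
      have hxy : infDist x M ≤ infDist y M := by
        have : 0 ≤ k * ((1 - θ) * δ) := mul_nonneg k.cast_nonneg (mul_nonneg (by linarith) hδ)
        linarith
      have hyK : y ∈ K := ⟨mem_closedBall.2 (by linarith), show c ≤ infDist y M by linarith⟩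
      set y' := y + δ • unitNormal M P y
      have hyy' : dist y' y = δ := by
        rw [dist_eq_norm, add_sub_cancel_left, norm_smul, Real.norm_of_nonneg hδ,
          h.norm_unitNormal (hK y hyK).1.ne' (hK y hyK).2, mul_one]
      have hy'K : y' ∈ K := by
        refine ⟨mem_closedBall.2 ?_, ?_⟩
        · linarith [dist_triangle y' y x]
        · have := infDist_le_infDist_add_dist (s := M) (x := y) (y := y')
          rw [dist_comm, hyy'] at this
          have : θ * c ≤ c := by nlinarith
          show c ≤ infDist y' M; linarith
      refine ⟨y', hyy'.le, ?_⟩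
      have hclose : ‖unitNormal M P y' - unitNormal M P y‖ ≤ θ / 2 := by
        rw [← dist_eq_norm]
        exact (hν y' hy'K y hyK (hyy'.trans_lt (hδmin.trans_le (min_le_left _ _)))).le
      have hstep := h.infDist_add_le_infDist_add_smul (hK y hyK).1 (hK y hyK).2 (hK y' hy'K).2
        hc hy'K.2 hδ hclose
      have : δ ^ 2 / (2 * c) ≤ θ / 2 * δ := by
        rw [div_le_iff₀ (by positivity)]; nlinarith
      linarith
  refine ⟨y, hnδ ▸ hyx, ?_⟩
  calc infDist x M + (1 - θ) * t = infDist x M + n * ((1 - θ) * δ) := by rw [← hnδ]; ring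
    _ ≤ infDist y M := hfy

theorem exists_infDist_eq_add [ProperSpace E] (h : IsNearestPointMap M R P) {t : ℝ}
    (hx : 0 < infDist x M) (ht : 0 ≤ t) (hxt : infDist x M + t < R) :
    ∃ y, dist y x ≤ t ∧ infDist y M = infDist x M + t := by
  obtain ⟨y, hy, hmax⟩ := (isCompact_closedBall x t).exists_isMaxOn (nonempty_closedBall.2 ht)
    (continuous_infDist_pt M).continuousOn
  refine ⟨y, hy, le_antisymm ?_ ?_⟩
  · linarith [infDist_le_infDist_add_dist (s := M) (x := y) (y := x), mem_closedBall.1 hy]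
  · have hlim : Tendsto (fun θ : ℝ => infDist x M + (1 - θ) * t) (𝓝[>] 0)
        (𝓝 (infDist x M + t)) := by
      have hcont : Continuous fun θ : ℝ => infDist x M + (1 - θ) * t := by fun_prop
      simpa using (hcont.tendsto 0).mono_left nhdsWithin_le_nhds
    refine le_of_tendsto hlim ?_
    filter_upwards [Ioo_mem_nhdsGT one_pos] with θ hθ
    obtain ⟨z, hz, hdz⟩ := h.exists_dist_le_and_le_infDist hx ht hxt hθ.1 hθ.2
    exact hdz.trans (hmax (mem_closedBall.2 hz))

theorem inner_le_of_lt [ProperSpace E] (h : IsNearestPointMap M R P) {r : ℝ}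
    (hx : 0 < infDist x M) (hr : infDist x M < r) (hrR : r < R) (hb : b ∈ M) :
    ⟪x - P x, b - P x⟫ ≤ infDist x M / (2 * r) * ‖b - P x‖ ^ 2 := by
  obtain ⟨y, hyx, hy⟩ := h.exists_infDist_eq_add hx (sub_nonneg.2 hr.le) (by linarith)
  rw [add_sub_cancel] at hy
  set a := P x
  have hxR : infDist x M < R := hr.trans hrR
  have hxa : ‖x - a‖ = infDist x M := h.norm_sub_eq hxR
  have hya : ‖y - a‖ = r := by
    refine le_antisymm ?_ ?_
    · calc ‖y - a‖ = ‖(y - x) + (x - a)‖ := by rw [sub_add_sub_cancel]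
        _ ≤ ‖y - x‖ + ‖x - a‖ := norm_add_le _ _
        _ ≤ r := by rw [← dist_eq_norm, hxa]; linarith
    · rw [← hy, ← dist_eq_norm]; exact infDist_le_dist_of_mem (h.mem hxR)
  have hcol : infDist x M • (y - a) = r • (x - a) := by
    have hray : SameRay ℝ (y - x) (x - a) := by
      refine sameRay_iff_norm_add.2 (le_antisymm (norm_add_le _ _) ?_)
      rw [sub_add_sub_cancel, hya, hxa, ← dist_eq_norm]; linarith
    have := sameRay_iff_norm_smul_eq.1 (hray.symm.add_right SameRay.rfl)
    rwa [sub_add_sub_cancel, hxa, hya] at this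
  have hball : 2 * ⟪y - a, b - a⟫ ≤ ‖b - a‖ ^ 2 := by
    refine two_inner_le_norm_sq_of_norm_le_norm_sub ?_
    rw [sub_sub_sub_cancel_right, hya, ← hy, ← dist_eq_norm]
    exact infDist_le_dist_of_mem hb
  have hscale : r * ⟪x - a, b - a⟫ = infDist x M * ⟪y - a, b - a⟫ := by
    rw [← real_inner_smul_left, ← real_inner_smul_left, hcol]
  rw [div_mul_eq_mul_div, le_div_iff₀ (by linarith)]
  nlinarith

theorem inner_le [ProperSpace E] (h : IsNearestPointMap M R P) (hx : infDist x M < R)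
    (hb : b ∈ M) : ⟪x - P x, b - P x⟫ ≤ infDist x M / (2 * R) * ‖b - P x‖ ^ 2 := by
  rcases (infDist_nonneg (x := x) (s := M)).eq_or_lt with h0 | h0
  · have hPx : P x = x := dist_eq_zero.1 (h0 ▸ h.dist_eq hx)
    simp [hPx, ← h0]
  · have hlim : Tendsto (fun r => infDist x M / (2 * r) * ‖b - P x‖ ^ 2) (𝓝[<] R)
        (𝓝 (infDist x M / (2 * R) * ‖b - P x‖ ^ 2)) := by
      have hcont : ContinuousAt (fun r => infDist x M / (2 * r) * ‖b - P x‖ ^ 2) R := by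
        have : (2 * R) ≠ 0 := by linarith
        fun_prop (disch := assumption)
      exact hcont.tendsto.mono_left nhdsWithin_le_nhds
    refine ge_of_tendsto hlim ?_
    filter_upwards [Ioo_mem_nhdsLT hx] with r hr
    exact h.inner_le_of_lt h0 hr.1 hr.2 hb

theorem dist_le_of_infDist_le [ProperSpace E] (h : IsNearestPointMap M R P) {γ : ℝ}
    (hγ : 0 < γ) (hγR : γ < R) (hx : infDist x M ≤ γ) (hy : infDist y M ≤ γ) :
    dist (P x) (P y) ≤ R / (R - γ) * dist x y := by
  have hR : 0 < R := hγ.trans hγR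
  have hxR := hx.trans_lt hγR
  have hyR := hy.trans_lt hγR
  have hxy := h.inner_le hxR (h.mem hyR)
  have hyx := h.inner_le hyR (h.mem hxR)
  rw [norm_sub_rev (P y)] at hxy
  have hsum : ⟪x - P x, P y - P x⟫ + ⟪y - P y, P x - P y⟫
      = ‖P x - P y‖ ^ 2 - ⟪x - y, P x - P y⟫ := by
    rw [← real_inner_self_eq_norm_sq, ← neg_sub (P x) (P y), inner_neg_right, neg_add_eq_sub,
      ← inner_sub_left, ← inner_sub_left]
    congr 1; abel
  have hγx : infDist x M / (2 * R) ≤ γ / (2 * R) := by gcongr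
  have hγy : infDist y M / (2 * R) ≤ γ / (2 * R) := by gcongr
  have key : (R - γ) * ‖P x - P y‖ ^ 2 ≤ R * ⟪x - y, P x - P y⟫ := by
    have hR2 : γ / (2 * R) * (2 * R) = γ := div_mul_cancel₀ γ (by positivity)
    nlinarith [mul_le_mul_of_nonneg_right hγx (sq_nonneg ‖P x - P y‖),
      mul_le_mul_of_nonneg_right hγy (sq_nonneg ‖P x - P y‖)]
  rw [dist_eq_norm, dist_eq_norm]
  exact norm_le_div_mul_of_mul_sq_le_inner (by linarith) hR.le key

end IsNearestPointMap

theorem stmt0_general {N : ℕ} (M : Set (EuclideanSpace ℝ (Fin N)))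
    (R : ℝ)
    (P : EuclideanSpace ℝ (Fin N) → EuclideanSpace ℝ (Fin N))
    (hP : ∀ x, Metric.infDist x M < R →
      P x ∈ M ∧ dist (P x) x = Metric.infDist x M ∧
        ∀ y ∈ M, dist y x = Metric.infDist x M → y = P x) :
    ∀ γ : ℝ, 0 < γ → γ < R →
      ∀ x y, Metric.infDist x M ≤ γ → Metric.infDist y M ≤ γ →
        dist (P x) (P y) ≤ (R / (R - γ)) * dist x y :=
  fun _ hγ hγR _ _ hx hy => IsNearestPointMap.dist_le_of_infDist_le hP hγ hγR hx hy

/-- If `M` is an `R`-proximally smooth closed subset of a Euclidean space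
(the nearest-point projection `P` is single-valued on the open `R`-tube around `M`),
then for any `γ ∈ (0, R)`, the projection `P` is Lipschitz with constant `R/(R-γ)`
on the closed `γ`-tube `{x : dist(x, M) ≤ γ}`. -/
theorem stmt0 {N : ℕ} (M : Set (EuclideanSpace ℝ (Fin N))) (hMclosed : IsClosed M)
    (hMne : M.Nonempty) (R : ℝ) (hR : 0 < R)
    (P : EuclideanSpace ℝ (Fin N) → EuclideanSpace ℝ (Fin N))
    (hP : ∀ x, Metric.infDist x M < R →
      P x ∈ M ∧ dist (P x) x = Metric.infDist x M ∧
        ∀ y ∈ M, dist y x = Metric.infDist x M → y = P x) :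
    ∀ γ : ℝ, 0 < γ → γ < R →
      ∀ x y, Metric.infDist x M ≤ γ → Metric.infDist y M ≤ γ →
        dist (P x) (P y) ≤ (R / (R - γ)) * dist x y :=
  stmt0_general M R P hP
end

section
/- Distance between Euclidean mean and induced manifold mean: let M be an R-proximally smooth compact C²-submanifold and let M₂ = max over the closed R/2-tube of the operator norm of the second derivative (Hessian) of P_M. If x₁,…,x_n ∈ M satisfy ‖x_i − x̄‖ ≤ R/2 for all i, where x̂ = (1/n)∑x_i and x̄ = P_M(x̂), then ‖x̄ − x̂‖ ≤ (M₂/n) ∑_{i=1}^n ‖x_i − x̄‖². -/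
/-!
The mean `x̂` minimises `c ↦ ∑ ‖xᵢ - c‖²`, so some `xᵢ` lies within `R/2` of `x̂`; hence `x̂` is in
the tube and `‖x̂ - x̄‖ = d(x̂, M) ≤ R/2`, i.e. the ball `B(x̄, R/2)` contains `x̂` and all the `xᵢ`.
Since `P` fixes every `xᵢ ∈ M`, a second-order Taylor estimate of `P` at `x̂` on that ball gives
`xᵢ - x̄ = P xᵢ - P x̂ = DP(x̂) (xᵢ - x̂) + O(M₂ ‖xᵢ - x̂‖²)`. Summing over `i`, the linear terms
cancel because `∑ (xᵢ - x̂) = 0`, leaving `n (x̂ - x̄)`; finally `∑ ‖xᵢ - x̂‖² ≤ ∑ ‖xᵢ - x̄‖²`,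
again by minimality of the mean.
-/

open Metric Finset

section Mean

variable {ι E : Type*} [Fintype ι]

section Module

variable [AddCommGroup E] [Module ℝ E]

noncomputable def mean (x : ι → E) : E :=
  (Fintype.card ι : ℝ)⁻¹ • ∑ i, x i

lemma mean_fin {n : ℕ} (x : Fin n → E) : mean x = (n : ℝ)⁻¹ • ∑ i, x i := by
  rw [mean, Fintype.card_fin]

lemma card_smul_mean (x : ι → E) : (Fintype.card ι : ℝ) • mean x = ∑ i, x i := by
  rcases eq_or_ne (Fintype.card ι) 0 with h | h
  · have : IsEmpty ι := Fintype.card_eq_zero_iff.mp h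
    simp
  · rw [mean, smul_smul, mul_inv_cancel₀ (Nat.cast_ne_zero.mpr h), one_smul]

lemma sum_sub_mean (x : ι → E) : ∑ i, (x i - mean x) = 0 := by
  rw [sum_sub_distrib, sum_const, card_univ, ← Nat.cast_smul_eq_nsmul ℝ, card_smul_mean,
    sub_self]

end Module

variable [NormedAddCommGroup E] [InnerProductSpace ℝ E]

lemma sum_norm_sub_mean_sq_le (x : ι → E) (c : E) :
    ∑ i, ‖x i - mean x‖ ^ 2 ≤ ∑ i, ‖x i - c‖ ^ 2 := by
  have hsplit : ∀ i, ‖x i - c‖ ^ 2 =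
      ‖x i - mean x‖ ^ 2 + 2 * inner ℝ (x i - mean x) (mean x - c) + ‖mean x - c‖ ^ 2 := by
    intro i
    rw [← norm_add_sq_real, sub_add_sub_cancel]
  have hcross : ∑ i, inner ℝ (x i - mean x) (mean x - c) = 0 := by
    rw [← sum_inner, sum_sub_mean, inner_zero_left]
  simp only [hsplit, sum_add_distrib, ← mul_sum, hcross, mul_zero, add_zero]
  exact le_add_of_nonneg_right (sum_nonneg fun i _ => sq_nonneg _)

lemma exists_norm_sub_mean_le [Nonempty ι] (x : ι → E) {c : E} {r : ℝ}
    (h : ∀ i, ‖x i - c‖ ≤ r) : ∃ i, ‖x i - mean x‖ ≤ r := by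
  have hsum : ∑ i, ‖x i - mean x‖ ^ 2 ≤ ∑ _i : ι, r ^ 2 :=
    (sum_norm_sub_mean_sq_le x c).trans
      (sum_le_sum fun i _ => pow_le_pow_left₀ (norm_nonneg _) (h i) 2)
  obtain ⟨i, -, hi⟩ := exists_le_of_sum_le univ_nonempty hsum
  exact ⟨i, abs_le_of_sq_le_sq' hi ((norm_nonneg _).trans (h i)) |>.2⟩

end Mean

section Taylor

variable {E F : Type*} [NormedAddCommGroup E] [NormedSpace ℝ E] [NormedAddCommGroup F]
  [NormedSpace ℝ F] {f : E → F} {f' : E → E →L[ℝ] F} {f'' : E → E →L[ℝ] E →L[ℝ] F}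
  {s : Set E} {K : ℝ}

theorem Convex.norm_image_sub_sub_fderiv_le (hs : Convex ℝ s)
    (hf : ∀ z ∈ s, HasFDerivWithinAt f (f' z) s z)
    (hf' : ∀ z ∈ s, HasFDerivWithinAt f' (f'' z) s z) (hK : ∀ z ∈ s, ‖f'' z‖ ≤ K)
    {a b : E} (ha : a ∈ s) (hb : b ∈ s) :
    ‖f b - f a - f' a (b - a)‖ ≤ K * ‖b - a‖ ^ 2 := by
  have hK0 : 0 ≤ K := (norm_nonneg (f'' a)).trans (hK a ha)
  have hseg : segment ℝ a b ⊆ s := hs.segment_subset ha hb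
  have hlip : ∀ z ∈ segment ℝ a b, ‖f' z - f' a‖ ≤ K * ‖b - a‖ := fun z hz =>
    calc ‖f' z - f' a‖ ≤ K * ‖z - a‖ :=
          hs.norm_image_sub_le_of_norm_hasFDerivWithin_le hf' hK ha (hseg hz)
      _ ≤ K * ‖b - a‖ := mul_le_mul_of_nonneg_left (norm_sub_le_of_mem_segment hz) hK0
  calc ‖f b - f a - f' a (b - a)‖ ≤ K * ‖b - a‖ * ‖b - a‖ :=
        (convex_segment a b).norm_image_sub_le_of_norm_hasFDerivWithin_le'
          (fun z hz => (hf z (hseg hz)).mono hseg) hlip (left_mem_segment ℝ a b)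
          (right_mem_segment ℝ a b)
    _ = K * ‖b - a‖ ^ 2 := by ring

end Taylor

theorem card_mul_norm_map_mean_sub_mean_le {ι E : Type*} [Fintype ι] [NormedAddCommGroup E]
    [NormedSpace ℝ E] {f : E → E} {f' : E → E →L[ℝ] E} {f'' : E → E →L[ℝ] E →L[ℝ] E}
    {s : Set E} {K : ℝ} (hs : Convex ℝ s) (hf : ∀ z ∈ s, HasFDerivWithinAt f (f' z) s z)
    (hf' : ∀ z ∈ s, HasFDerivWithinAt f' (f'' z) s z) (hK : ∀ z ∈ s, ‖f'' z‖ ≤ K)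
    (x : ι → E) (hxs : ∀ i, x i ∈ s) (hmean : mean x ∈ s) (hfix : ∀ i, f (x i) = x i) :
    Fintype.card ι * ‖f (mean x) - mean x‖ ≤ K * ∑ i, ‖x i - mean x‖ ^ 2 := by
  set m := mean x
  have hsum : (Fintype.card ι : ℝ) • (m - f m) = ∑ i, (f (x i) - f m - f' m (x i - m)) := by
    simp only [hfix]
    rw [sum_sub_distrib, ← map_sum, sum_sub_mean, map_zero, sub_zero, sum_sub_distrib, sum_const,
      card_univ, ← Nat.cast_smul_eq_nsmul ℝ, smul_sub, card_smul_mean]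
  calc Fintype.card ι * ‖f m - m‖ = ‖(Fintype.card ι : ℝ) • (m - f m)‖ := by
        rw [norm_smul, norm_sub_rev, Real.norm_natCast]
    _ ≤ ∑ i, ‖f (x i) - f m - f' m (x i - m)‖ := hsum ▸ norm_sum_le _ _
    _ ≤ ∑ i, K * ‖x i - m‖ ^ 2 :=
        sum_le_sum fun i _ => hs.norm_image_sub_sub_fderiv_le hf hf' hK hmean (hxs i)
    _ = K * ∑ i, ‖x i - m‖ ^ 2 := (mul_sum _ _ _).symm

lemma norm_fderiv_fderiv_eq_norm_iteratedFDerivWithin_two {𝕜 E F : Type*}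
    [NontriviallyNormedField 𝕜] [NormedAddCommGroup E] [NormedSpace 𝕜 E] [NormedAddCommGroup F]
    [NormedSpace 𝕜 F] {f : E → F} {s : Set E} {z : E} (hs : IsOpen s) (hz : z ∈ s) :
    ‖fderiv 𝕜 (fderiv 𝕜 f) z‖ = ‖iteratedFDerivWithin 𝕜 2 f s z‖ := by
  rw [iteratedFDerivWithin_of_isOpen 2 hs hz, ← norm_iteratedFDeriv_fderiv,
    ← norm_iteratedFDeriv_fderiv (n := 0), norm_iteratedFDeriv_zero]

theorem card_mul_norm_map_mean_sub_mean_le_of_contDiffOn {ι E : Type*} [Fintype ι]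
    [NormedAddCommGroup E] [NormedSpace ℝ E] {f : E → E} {s U : Set E} {K : ℝ}
    (hU : IsOpen U) (hf : ContDiffOn ℝ 2 f U) (hs : Convex ℝ s) (hsU : s ⊆ U)
    (hK : ∀ z ∈ s, ‖iteratedFDerivWithin ℝ 2 f U z‖ ≤ K)
    (x : ι → E) (hxs : ∀ i, x i ∈ s) (hmean : mean x ∈ s) (hfix : ∀ i, f (x i) = x i) :
    Fintype.card ι * ‖f (mean x) - mean x‖ ≤ K * ∑ i, ‖x i - mean x‖ ^ 2 := by
  have hC2 : ∀ z ∈ s, ContDiffAt ℝ 2 f z := fun z hz => hf.contDiffAt (hU.mem_nhds (hsU hz))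
  refine card_mul_norm_map_mean_sub_mean_le hs
    (fun z hz => ((hC2 z hz).differentiableAt (by norm_num)).hasFDerivAt.hasFDerivWithinAt)
    (fun z hz => (((hC2 z hz).fderiv_right (m := 1) (by norm_num)).differentiableAt
      (by norm_num)).hasFDerivAt.hasFDerivWithinAt)
    (fun z hz => ?_) x hxs hmean hfix
  rw [norm_fderiv_fderiv_eq_norm_iteratedFDerivWithin_two hU (hsU hz)]
  exact hK z hz

theorem stmt13_general {n N : ℕ} (hn : 0 < n)
    (M : Set (EuclideanSpace ℝ (Fin N)))
    (R : ℝ) (hR : 0 < R)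
    (P : EuclideanSpace ℝ (Fin N) → EuclideanSpace ℝ (Fin N))
    (hP : ∀ z, Metric.infDist z M < R →
      P z ∈ M ∧ dist (P z) z = Metric.infDist z M ∧
        ∀ y ∈ M, dist y z = Metric.infDist z M → y = P z)
    (hsmooth : ContDiffOn ℝ 2 P {z | Metric.infDist z M < R})
    (M₂ : ℝ)
    (hM₂ : ∀ z, Metric.infDist z M ≤ R / 2 →
      ‖iteratedFDerivWithin ℝ 2 P {w | Metric.infDist w M < R} z‖ ≤ M₂)
    (x : Fin n → EuclideanSpace ℝ (Fin N)) (hxM : ∀ i, x i ∈ M)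
    (hclose : ∀ i, ‖x i - P ((n : ℝ)⁻¹ • ∑ j, x j)‖ ≤ R / 2) :
    ‖P ((n : ℝ)⁻¹ • ∑ j, x j) - (n : ℝ)⁻¹ • ∑ j, x j‖ ≤
      (M₂ / n) * ∑ i, ‖x i - P ((n : ℝ)⁻¹ • ∑ j, x j)‖ ^ 2 := by
  rw [← mean_fin] at hclose ⊢
  set xbar := P (mean x)
  have : Nonempty (Fin n) := ⟨⟨0, hn⟩⟩
  obtain ⟨i₀, hi₀⟩ := exists_norm_sub_mean_le x hclose
  have hmean_near : infDist (mean x) M ≤ R / 2 :=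
    (infDist_le_dist_of_mem (hxM i₀)).trans (by rwa [dist_comm, dist_eq_norm])
  obtain ⟨hxbarM, hxbar_dist, -⟩ := hP (mean x) (hmean_near.trans_lt (half_lt_self hR))
  have hfix : ∀ i, P (x i) = x i := fun i => by
    have h0 : infDist (x i) M = 0 := infDist_zero_of_mem (hxM i)
    exact ((hP (x i) (h0 ▸ hR)).2.2 (x i) (hxM i) (by rw [h0, dist_self])).symm
  have hball : ∀ z ∈ closedBall xbar (R / 2), infDist z M ≤ R / 2 := fun z hz =>
    (infDist_le_dist_of_mem hxbarM).trans hz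
  have hM₂0 : 0 ≤ M₂ :=
    (norm_nonneg _).trans (hM₂ xbar (by rw [infDist_zero_of_mem hxbarM]; positivity))
  have hcore := card_mul_norm_map_mean_sub_mean_le_of_contDiffOn
    (isOpen_lt (continuous_infDist_pt M) continuous_const) hsmooth (convex_closedBall xbar (R / 2))
    (fun z hz => (hball z hz).trans_lt (half_lt_self hR)) (fun z hz => hM₂ z (hball z hz))
    x (fun i => mem_closedBall_iff_norm.2 (hclose i))
    (by rw [mem_closedBall, dist_comm, hxbar_dist]; exact hmean_near) hfix
  rw [Fintype.card_fin] at hcore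
  rw [div_mul_eq_mul_div, le_div_iff₀ (by positivity), mul_comm]
  exact hcore.trans (mul_le_mul_of_nonneg_left (sum_norm_sub_mean_sq_le x xbar) hM₂0)

/-- distance between Euclidean mean and induced manifold mean:
let `M` be an `R`-proximally smooth compact `C²` set whose projection `P` is `C²` on
the open `R`-tube, and let `M₂` bound the operator norm of the second derivative of `P`
on the closed `R/2`-tube. If `x₁,…,x_n ∈ M` satisfy `‖x_i - x̄‖ ≤ R/2` for all `i`,
where `x̂ = (1/n) ∑ x_i` and `x̄ = P(x̂)`, then
`‖x̄ - x̂‖ ≤ (M₂/n) ∑ᵢ ‖x_i - x̄‖²`. -/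
theorem stmt13 {n N : ℕ} (hn : 0 < n)
    (M : Set (EuclideanSpace ℝ (Fin N))) (hMcompact : IsCompact M) (hMne : M.Nonempty)
    (R : ℝ) (hR : 0 < R)
    (P : EuclideanSpace ℝ (Fin N) → EuclideanSpace ℝ (Fin N))
    (hP : ∀ z, Metric.infDist z M < R →
      P z ∈ M ∧ dist (P z) z = Metric.infDist z M ∧
        ∀ y ∈ M, dist y z = Metric.infDist z M → y = P z)
    (hsmooth : ContDiffOn ℝ 2 P {z | Metric.infDist z M < R})
    (M₂ : ℝ) (hM₂0 : 0 ≤ M₂)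
    (hM₂ : ∀ z, Metric.infDist z M ≤ R / 2 →
      ‖iteratedFDerivWithin ℝ 2 P {w | Metric.infDist w M < R} z‖ ≤ M₂)
    (x : Fin n → EuclideanSpace ℝ (Fin N)) (hxM : ∀ i, x i ∈ M)
    (hclose : ∀ i, ‖x i - P ((n : ℝ)⁻¹ • ∑ j, x j)‖ ≤ R / 2) :
    ‖P ((n : ℝ)⁻¹ • ∑ j, x j) - (n : ℝ)⁻¹ • ∑ j, x j‖ ≤
      (M₂ / n) * ∑ i, ‖x i - P ((n : ℝ)⁻¹ • ∑ j, x j)‖ ^ 2 :=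
  stmt13_general hn M R hR P hP hsmooth M₂ hM₂ x hxM hclose
end

section
/- Consensus error contraction with perturbation for the compressed algorithm: let M be R-proximally smooth compact submanifold, W̃ = (1−γ)I + γW with the single-step contraction ‖x_{k+1} − x̄_{k+1}‖ ≤ ρ₁‖x_k − x̄_k‖ available for the unperturbed update (ρ₁ < 1, ρ̂ = 1 − ρ₁). Suppose ‖x_k − x̄_k‖ ≤ δ and the perturbation e_k = γ(W−I)(x̃_k − x_k) + η v_k satisfies ‖e_k‖ ≤ R/2 − δ, with x_{k+1} = P_{M^n}(W̃ x_k + e_k). Then ‖x_{k+1} − x̄_{k+1}‖² ≤ (1 − ρ̂/2)‖x_k − x̄_k‖² + (16/ρ̂)‖e_k‖², and hence ‖x_{k+1} − x̄_{k+1}‖² ≤ (1 − ρ̂/2)‖x_k − x̄_k‖² + (64γ²/ρ̂)‖x̃_k − x_k‖² + (16η²/ρ̂)‖v_k‖². -/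
open scoped BigOperators

/-- Frobenius norm of a stacked family of vectors. -/
noncomputable def stackNorm {n N : ℕ} (z : Fin n → EuclideanSpace ℝ (Fin N)) : ℝ :=
  Real.sqrt (∑ i, ‖z i‖ ^ 2)

/-!
Let `p` be the projection of the mean of `x`. All `x_j` lie in the convex ball `B(p, δ)`, hence so
do the averaged points `y_i = (1 - γ) x_i + γ (W x)_i`, and `y_i + e_i` stays within `R/2` of `M`.
The `2`-Lipschitz bound for the projection then puts the new iterate within
`(1 - ρ̂) ‖x - x̄‖ + 2 ‖e‖` of `p` in stacked norm. Re-centering at the projection of the new mean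
does not increase this distance: that projection is at least as close to the new mean as `p ∈ M`,
and `∑ ‖z_i - c‖² = ∑ ‖z_i - z̄‖² + n ‖z̄ - c‖²`. Young's inequality with weights `1 - ρ̂/2` and
`ρ̂/2` squares the bound. For the second estimate, `‖(W - I) d‖ ≤ 2 ‖d‖` because a doubly
stochastic matrix is a contraction for the stacked norm (Jensen).
-/

open Finset Metric

theorem sq_le_of_le_one_sub_mul_add {r s a T : ℝ} (hr0 : 0 < r) (hr1 : r ≤ 1) (hT0 : 0 ≤ T)
    (hT : T ≤ (1 - r) * s + a) : T ^ 2 ≤ (1 - r / 2) * s ^ 2 + 2 / r * a ^ 2 := by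
  have hr2 : 0 < 2 - r := by linarith
  have hr3 : 0 ≤ 4 - 3 * r := by linarith
  have hyoung : ((1 - r) * s + a) ^ 2 ≤ (1 - r / 2) * s ^ 2 + 2 / r * a ^ 2 := by
    rw [← sub_nonneg]
    -- Young's inequality with weights `1 - r/2` and `r/2`, plus `(1 - r)² ≤ (1 - r/2)²`
    have key : (1 - r / 2) * s ^ 2 + 2 / r * a ^ 2 - ((1 - r) * s + a) ^ 2 =
        (r * (1 - r) * s - (2 - r) * a) ^ 2 / (r * (2 - r)) +
          r * (4 - 3 * r) / (2 * (2 - r)) * s ^ 2 := by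
      field_simp
      ring
    rw [key]
    positivity
  exact (pow_le_pow_left₀ hT0 hT 2).trans hyoung

section Mean

variable {n : ℕ}

theorem Convex.inv_natCast_smul_sum_mem {E : Type*} [AddCommGroup E] [Module ℝ E] {s : Set E}
    (hs : Convex ℝ s) (hn : 0 < n) {z : Fin n → E} (hz : ∀ i, z i ∈ s) :
    (n : ℝ)⁻¹ • ∑ i, z i ∈ s := by
  rw [smul_sum]
  refine hs.sum_mem (fun _ _ => by positivity) ?_ fun i _ => hz i
  rw [sum_const, card_univ, Fintype.card_fin, nsmul_eq_mul, mul_inv_cancel₀ (by positivity)]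

theorem Convex.one_sub_smul_add_smul_sum_mem {E : Type*} [AddCommGroup E] [Module ℝ E]
    {s : Set E} (hs : Convex ℝ s) {W : Matrix (Fin n) (Fin n) ℝ} (hnn : ∀ i j, 0 ≤ W i j)
    (hrow : ∀ i, ∑ j, W i j = 1) {γ : ℝ} (hγ0 : 0 ≤ γ) (hγ1 : γ ≤ 1) {x : Fin n → E}
    (hx : ∀ i, x i ∈ s) (i : Fin n) : (1 - γ) • x i + γ • ∑ j, W i j • x j ∈ s :=
  hs (hx i) (hs.sum_mem (fun j _ => hnn i j) (hrow i) fun j _ => hx j) (by linarith) hγ0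
    (by ring)

variable {F : Type*} [NormedAddCommGroup F] [InnerProductSpace ℝ F]

theorem sum_norm_sub_sq_eq (z : Fin n → F) (c : F) :
    ∑ i, ‖z i - c‖ ^ 2 = ∑ i, ‖z i - (n : ℝ)⁻¹ • ∑ j, z j‖ ^ 2 +
      n * ‖(n : ℝ)⁻¹ • ∑ j, z j - c‖ ^ 2 := by
  rcases Nat.eq_zero_or_pos n with rfl | hn
  · simp
  set m := (n : ℝ)⁻¹ • ∑ j, z j
  have hcentered : ∑ i, (z i - m) = 0 := by
    rw [sum_sub_distrib, sum_const, card_univ, Fintype.card_fin, ← Nat.cast_smul_eq_nsmul ℝ,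
      smul_smul, mul_inv_cancel₀ (by positivity), one_smul, sub_self]
  have hpoint : ∀ i, ‖z i - c‖ ^ 2 = ‖z i - m‖ ^ 2 + 2 * inner ℝ (z i - m) (m - c) + ‖m - c‖ ^ 2 :=
    fun i => by rw [← norm_add_sq_real, sub_add_sub_cancel]
  simp_rw [hpoint, sum_add_distrib, ← mul_sum, ← sum_inner, hcentered, inner_zero_left]
  simp

theorem sum_norm_sub_sq_le_of_norm_mean_sub_le (z : Fin n → F) {u w : F}
    (h : ‖(n : ℝ)⁻¹ • ∑ i, z i - u‖ ≤ ‖(n : ℝ)⁻¹ • ∑ i, z i - w‖) :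
    ∑ i, ‖z i - u‖ ^ 2 ≤ ∑ i, ‖z i - w‖ ^ 2 := by
  rw [sum_norm_sub_sq_eq z u, sum_norm_sub_sq_eq z w]
  gcongr

end Mean

section StackNorm

variable {n N : ℕ}

theorem stackNorm_eq_norm_toLp (z : Fin n → EuclideanSpace ℝ (Fin N)) :
    stackNorm z = ‖WithLp.toLp 2 z‖ := by
  rw [PiLp.norm_eq_of_L2]; rfl

theorem stackNorm_nonneg (z : Fin n → EuclideanSpace ℝ (Fin N)) : 0 ≤ stackNorm z :=
  Real.sqrt_nonneg _

theorem norm_le_stackNorm (z : Fin n → EuclideanSpace ℝ (Fin N)) (i : Fin n) :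
    ‖z i‖ ≤ stackNorm z := by
  rw [stackNorm_eq_norm_toLp]
  exact PiLp.norm_apply_le (WithLp.toLp 2 z) i

theorem stackNorm_add_le (f g : Fin n → EuclideanSpace ℝ (Fin N)) :
    stackNorm (fun i => f i + g i) ≤ stackNorm f + stackNorm g := by
  simp only [stackNorm_eq_norm_toLp]
  exact norm_add_le (WithLp.toLp 2 f) (WithLp.toLp 2 g)

theorem stackNorm_sub_le (f g : Fin n → EuclideanSpace ℝ (Fin N)) :
    stackNorm (fun i => f i - g i) ≤ stackNorm f + stackNorm g := by
  simp only [stackNorm_eq_norm_toLp]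
  exact norm_sub_le (WithLp.toLp 2 f) (WithLp.toLp 2 g)

theorem stackNorm_smul (c : ℝ) (f : Fin n → EuclideanSpace ℝ (Fin N)) :
    stackNorm (fun i => c • f i) = |c| * stackNorm f := by
  simp only [stackNorm_eq_norm_toLp]
  exact norm_smul c (WithLp.toLp 2 f)

theorem stackNorm_le_stackNorm {f g : Fin n → EuclideanSpace ℝ (Fin N)}
    (h : ∀ i, ‖f i‖ ≤ ‖g i‖) : stackNorm f ≤ stackNorm g :=
  Real.sqrt_le_sqrt <| sum_le_sum fun i _ => pow_le_pow_left₀ (norm_nonneg _) (h i) 2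

theorem stackNorm_sum_smul_le_of_mem_doublyStochastic {W : Matrix (Fin n) (Fin n) ℝ}
    (hW : W ∈ doublyStochastic ℝ (Fin n)) (d : Fin n → EuclideanSpace ℝ (Fin N)) :
    stackNorm (fun i => ∑ j, W i j • d j) ≤ stackNorm d := by
  have hjensen : ∀ i, ‖∑ j, W i j • d j‖ ^ 2 ≤ ∑ j, W i j * ‖d j‖ ^ 2 := fun i =>
    (convexOn_univ_norm.pow (fun _ _ => norm_nonneg _) 2).map_sum_le
      (fun j _ => nonneg_of_mem_doublyStochastic hW)
      (sum_row_of_mem_doublyStochastic hW i) (fun _ _ => Set.mem_univ _)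
  refine Real.sqrt_le_sqrt ((sum_le_sum fun i _ => hjensen i).trans_eq ?_)
  rw [sum_comm]
  simp_rw [← sum_mul, sum_col_of_mem_doublyStochastic hW, one_mul]

theorem stackNorm_smul_sum_sub_add_smul_le {W : Matrix (Fin n) (Fin n) ℝ}
    (hW : W ∈ doublyStochastic ℝ (Fin n)) (γ η : ℝ) (d v : Fin n → EuclideanSpace ℝ (Fin N)) :
    stackNorm (fun i => γ • ((∑ j, W i j • d j) - d i) + η • v i) ≤
      2 * |γ| * stackNorm d + |η| * stackNorm v := by
  have hWI : stackNorm (fun i => (∑ j, W i j • d j) - d i) ≤ 2 * stackNorm d :=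
    (stackNorm_sub_le _ _).trans
      (by linarith [stackNorm_sum_smul_le_of_mem_doublyStochastic hW d])
  calc _ ≤ stackNorm (fun i => γ • ((∑ j, W i j • d j) - d i)) + stackNorm (fun i => η • v i) :=
        stackNorm_add_le _ _
    _ = |γ| * stackNorm (fun i => (∑ j, W i j • d j) - d i) + |η| * stackNorm v := by
        rw [stackNorm_smul, stackNorm_smul]
    _ ≤ |γ| * (2 * stackNorm d) + |η| * stackNorm v := by gcongr
    _ = 2 * |γ| * stackNorm d + |η| * stackNorm v := by ring

end StackNorm

section Projection

variable {n : ℕ} {F : Type*} [NormedAddCommGroup F] {M : Set F} {R δ : ℝ} {P : F → F}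

theorem proj_mean_mem [NormedSpace ℝ F] (hP : ∀ z, infDist z M < R → P z ∈ M) (hn : 0 < n)
    {x : Fin n → F} (hxM : ∀ i, x i ∈ M) {c : F} (hx : ∀ i, x i ∈ closedBall c δ)
    (hδR : δ < R / 2) : P ((n : ℝ)⁻¹ • ∑ i, x i) ∈ M := by
  let i₀ : Fin n := ⟨0, hn⟩
  have hm := (convex_closedBall c δ).inv_natCast_smul_sum_mem hn hx
  refine hP _ ?_
  calc infDist ((n : ℝ)⁻¹ • ∑ i, x i) M ≤ dist ((n : ℝ)⁻¹ • ∑ i, x i) (x i₀) :=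
        infDist_le_dist_of_mem (hxM i₀)
    _ ≤ δ + δ := (dist_triangle_right _ _ c).trans (add_le_add hm (hx i₀))
    _ < R := by linarith

theorem norm_proj_add_sub_proj_le
    (hlip2 : ∀ a b, infDist a M ≤ R / 2 → infDist b M ≤ R / 2 → ‖P a - P b‖ ≤ 2 * ‖a - b‖)
    {p y e : F} (hp : p ∈ M) (hy : y ∈ closedBall p δ) (he : ‖e‖ ≤ R / 2 - δ) :
    ‖P (y + e) - P y‖ ≤ 2 * ‖e‖ := by
  have hy' : infDist y M ≤ δ := (infDist_le_dist_of_mem hp).trans hy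
  have hye : infDist (y + e) M ≤ δ + ‖e‖ :=
    (infDist_le_dist_of_mem hp).trans <| (dist_triangle _ y p).trans <| by
      rw [dist_self_add_left, add_comm]; exact add_le_add_left hy _
  simpa using hlip2 (y + e) y (by linarith) (by linarith [norm_nonneg e])

end Projection

section StackedProjection

variable {n N : ℕ} {M : Set (EuclideanSpace ℝ (Fin N))} {R δ : ℝ}
  {P : EuclideanSpace ℝ (Fin N) → EuclideanSpace ℝ (Fin N)}

theorem stackNorm_proj_add_sub_le
    (hlip2 : ∀ a b, infDist a M ≤ R / 2 → infDist b M ≤ R / 2 → ‖P a - P b‖ ≤ 2 * ‖a - b‖)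
    {p : EuclideanSpace ℝ (Fin N)} (hp : p ∈ M) {y e : Fin n → EuclideanSpace ℝ (Fin N)}
    (hy : ∀ i, y i ∈ closedBall p δ) (he : stackNorm e ≤ R / 2 - δ) :
    stackNorm (fun i => P (y i + e i) - p) ≤ stackNorm (fun i => P (y i) - p) + 2 * stackNorm e := by
  have hlip : stackNorm (fun i => P (y i + e i) - P (y i)) ≤ stackNorm (fun i => (2 : ℝ) • e i) :=
    stackNorm_le_stackNorm fun i => by
      rw [norm_smul, Real.norm_two]
      exact norm_proj_add_sub_proj_le hlip2 hp (hy i) ((norm_le_stackNorm e i).trans he)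
  calc stackNorm (fun i => P (y i + e i) - p)
      = stackNorm (fun i => (P (y i + e i) - P (y i)) + (P (y i) - p)) := by
        simp_rw [sub_add_sub_cancel]
    _ ≤ stackNorm (fun i => (2 : ℝ) • e i) + stackNorm (fun i => P (y i) - p) :=
        (stackNorm_add_le _ _).trans (by gcongr)
    _ = stackNorm (fun i => P (y i) - p) + 2 * stackNorm e := by
        rw [stackNorm_smul, abs_two, add_comm]

theorem stackNorm_sub_proj_mean_le
    (hP : ∀ z, infDist z M < R → dist (P z) z = infDist z M) (hn : 0 < n)
    {z : Fin n → EuclideanSpace ℝ (Fin N)} {p : EuclideanSpace ℝ (Fin N)} (hp : p ∈ M)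
    (hzR : stackNorm (fun i => z i - p) < R) :
    stackNorm (fun i => z i - P ((n : ℝ)⁻¹ • ∑ j, z j)) ≤ stackNorm (fun i => z i - p) := by
  set m := (n : ℝ)⁻¹ • ∑ j, z j
  have hmp : dist m p ≤ stackNorm (fun i => z i - p) :=
    (convex_closedBall p _).inv_natCast_smul_sum_mem hn fun i =>
      mem_closedBall_iff_norm.2 (norm_le_stackNorm (fun i => z i - p) i)
  have hcloser : ‖m - P m‖ ≤ ‖m - p‖ := by
    rw [← dist_eq_norm, ← dist_eq_norm, dist_comm,
      hP m ((infDist_le_dist_of_mem hp).trans_lt (hmp.trans_lt hzR))]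
    exact infDist_le_dist_of_mem hp
  exact Real.sqrt_le_sqrt (sum_norm_sub_sq_le_of_norm_mean_sub_le z hcloser)

end StackedProjection

theorem stmt15_general {n N : ℕ} (hn : 0 < n)
    (M : Set (EuclideanSpace ℝ (Fin N)))
    (R : ℝ)
    (P : EuclideanSpace ℝ (Fin N) → EuclideanSpace ℝ (Fin N))
    (hP : ∀ z, Metric.infDist z M < R →
      P z ∈ M ∧ dist (P z) z = Metric.infDist z M ∧
        ∀ y ∈ M, dist y z = Metric.infDist z M → y = P z)
    (hlip2 : ∀ a b, Metric.infDist a M ≤ R / 2 → Metric.infDist b M ≤ R / 2 →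
      ‖P a - P b‖ ≤ 2 * ‖a - b‖)
    (W : Matrix (Fin n) (Fin n) ℝ) (hsymm : W.IsSymm) (hnn : ∀ i j, 0 ≤ W i j)
    (hrow : ∀ i, ∑ j, W i j = 1)
    (γ : ℝ) (hγ0 : 0 < γ) (hγ1 : γ ≤ 1)
    (η : ℝ)
    (ρhat : ℝ) (hρ0 : 0 < ρhat) (hρ1 : ρhat ≤ 1)
    (δ : ℝ) (hδ0 : 0 < δ) (hδR : δ < R / 2)
    (x xt v : Fin n → EuclideanSpace ℝ (Fin N)) (hxM : ∀ i, x i ∈ M)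
    -- the single-step contraction of the unperturbed projected consensus update
    (hcontr : stackNorm (fun i =>
        P ((1 - γ) • x i + γ • (∑ j, W i j • x j)) - P ((n : ℝ)⁻¹ • ∑ j, x j)) ≤
      (1 - ρhat) * stackNorm (fun i => x i - P ((n : ℝ)⁻¹ • ∑ j, x j)))
    (hclose : stackNorm (fun i => x i - P ((n : ℝ)⁻¹ • ∑ j, x j)) ≤ δ)
    (e : Fin n → EuclideanSpace ℝ (Fin N))
    (he : ∀ i, e i = γ • ((∑ j, W i j • (xt j - x j)) - (xt i - x i)) + η • v i)
    (hebound : stackNorm e ≤ R / 2 - δ)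
    (xnext : Fin n → EuclideanSpace ℝ (Fin N))
    (hnext : ∀ i, xnext i = P ((1 - γ) • x i + γ • (∑ j, W i j • x j) + e i)) :
    stackNorm (fun i => xnext i - P ((n : ℝ)⁻¹ • ∑ j, xnext j)) ^ 2 ≤
      (1 - ρhat / 2) * stackNorm (fun i => x i - P ((n : ℝ)⁻¹ • ∑ j, x j)) ^ 2 +
        (16 / ρhat) * stackNorm e ^ 2 ∧
    stackNorm (fun i => xnext i - P ((n : ℝ)⁻¹ • ∑ j, xnext j)) ^ 2 ≤
      (1 - ρhat / 2) * stackNorm (fun i => x i - P ((n : ℝ)⁻¹ • ∑ j, x j)) ^ 2 +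
        (64 * γ ^ 2 / ρhat) * stackNorm (fun i => xt i - x i) ^ 2 +
        (16 * η ^ 2 / ρhat) * stackNorm v ^ 2 := by
  have hE : stackNorm e ≤ 2 * |γ| * stackNorm (fun i => xt i - x i) + |η| * stackNorm v := by
    rw [show e = _ from funext he]
    exact stackNorm_smul_sum_sub_add_smul_le (mem_doublyStochastic_iff_sum.2 ⟨hnn, hrow,
      fun j => (sum_congr rfl fun i _ => hsymm.apply j i).trans (hrow j)⟩) γ η _ v
  set p := P ((n : ℝ)⁻¹ • ∑ j, x j)
  set s := stackNorm (fun i => x i - p)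
  set E := stackNorm e
  set D := stackNorm (fun i => xt i - x i)
  have hx : ∀ i, x i ∈ closedBall p δ := fun i =>
    mem_closedBall_iff_norm.2 ((norm_le_stackNorm (fun i => x i - p) i).trans hclose)
  have hpM : p ∈ M := proj_mean_mem (fun z hz => (hP z hz).1) hn hxM hx hδR
  have hstep : stackNorm (fun i => xnext i - p) ≤ (1 - ρhat) * s + 2 * E := by
    simp_rw [hnext]
    exact (stackNorm_proj_add_sub_le hlip2 hpM
      ((convex_closedBall p δ).one_sub_smul_add_smul_sum_mem hnn hrow hγ0.le hγ1 hx)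
      hebound).trans (by linarith)
  have hT := (stackNorm_sub_proj_mean_le (fun z hz => (hP z hz).2.1) hn hpM
    (hstep.trans_lt (by nlinarith [stackNorm_nonneg (fun i => x i - p)]))).trans hstep
  constructor
  · refine (sq_le_of_le_one_sub_mul_add hρ0 hρ1 (stackNorm_nonneg _) hT).trans ?_
    calc (1 - ρhat / 2) * s ^ 2 + 2 / ρhat * (2 * E) ^ 2
        = (1 - ρhat / 2) * s ^ 2 + 8 / ρhat * E ^ 2 := by ring
      _ ≤ (1 - ρhat / 2) * s ^ 2 + 16 / ρhat * E ^ 2 := by gcongr; norm_num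
  · have hT' : _ ≤ (1 - ρhat) * s + (4 * |γ| * D + 2 * |η| * stackNorm v) :=
      hT.trans (by linarith)
    refine (sq_le_of_le_one_sub_mul_add hρ0 hρ1 (stackNorm_nonneg _) hT').trans ?_
    calc (1 - ρhat / 2) * s ^ 2 + 2 / ρhat * (4 * |γ| * D + 2 * |η| * stackNorm v) ^ 2
        ≤ (1 - ρhat / 2) * s ^ 2 +
          2 / ρhat * (2 * ((4 * |γ| * D) ^ 2 + (2 * |η| * stackNorm v) ^ 2)) := by
          gcongr; exact add_sq_le
      _ = _ := by simp only [mul_pow, sq_abs]; ring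

/-- consensus error contraction with perturbation, compressed algorithm:
let `M` be `R`-proximally smooth compact with projection `P` (`2`-Lipschitz on the
`R/2`-tube), `W̃ = (1-γ)I + γW`, with the single-step contraction
`‖P(W̃ x) - x̄‖ ≤ ρ₁ ‖x - x̄‖` available for the unperturbed update (`ρ₁ < 1`,
`ρ̂ = 1 - ρ₁`). Suppose `‖x - x̄‖ ≤ δ` and the perturbation
`e = γ (W - I)(x̃ - x) + η v` satisfies `‖e‖ ≤ R/2 - δ`, with
`x⁺ = P_{M^n}(W̃ x + e)`. Then
`‖x⁺ - x̄⁺‖² ≤ (1 - ρ̂/2) ‖x - x̄‖² + (16/ρ̂) ‖e‖²`, and hence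
`‖x⁺ - x̄⁺‖² ≤ (1 - ρ̂/2) ‖x - x̄‖² + (64γ²/ρ̂) ‖x̃ - x‖² + (16η²/ρ̂) ‖v‖²`. -/
theorem stmt15 {n N : ℕ} (hn : 0 < n)
    (M : Set (EuclideanSpace ℝ (Fin N))) (hMcompact : IsCompact M) (hMne : M.Nonempty)
    (R : ℝ) (hR : 0 < R)
    (P : EuclideanSpace ℝ (Fin N) → EuclideanSpace ℝ (Fin N))
    (hP : ∀ z, Metric.infDist z M < R →
      P z ∈ M ∧ dist (P z) z = Metric.infDist z M ∧
        ∀ y ∈ M, dist y z = Metric.infDist z M → y = P z)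
    (hlip2 : ∀ a b, Metric.infDist a M ≤ R / 2 → Metric.infDist b M ≤ R / 2 →
      ‖P a - P b‖ ≤ 2 * ‖a - b‖)
    (W : Matrix (Fin n) (Fin n) ℝ) (hsymm : W.IsSymm) (hnn : ∀ i j, 0 ≤ W i j)
    (hrow : ∀ i, ∑ j, W i j = 1)
    (γ : ℝ) (hγ0 : 0 < γ) (hγ1 : γ ≤ 1)
    (η : ℝ) (hη : 0 ≤ η)
    (ρhat : ℝ) (hρ0 : 0 < ρhat) (hρ1 : ρhat ≤ 1)
    (δ : ℝ) (hδ0 : 0 < δ) (hδR : δ < R / 2)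
    (x xt v : Fin n → EuclideanSpace ℝ (Fin N)) (hxM : ∀ i, x i ∈ M)
    -- the single-step contraction of the unperturbed projected consensus update
    (hcontr : stackNorm (fun i =>
        P ((1 - γ) • x i + γ • (∑ j, W i j • x j)) - P ((n : ℝ)⁻¹ • ∑ j, x j)) ≤
      (1 - ρhat) * stackNorm (fun i => x i - P ((n : ℝ)⁻¹ • ∑ j, x j)))
    (hclose : stackNorm (fun i => x i - P ((n : ℝ)⁻¹ • ∑ j, x j)) ≤ δ)
    (e : Fin n → EuclideanSpace ℝ (Fin N))
    (he : ∀ i, e i = γ • ((∑ j, W i j • (xt j - x j)) - (xt i - x i)) + η • v i)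
    (hebound : stackNorm e ≤ R / 2 - δ)
    (xnext : Fin n → EuclideanSpace ℝ (Fin N))
    (hnext : ∀ i, xnext i = P ((1 - γ) • x i + γ • (∑ j, W i j • x j) + e i)) :
    stackNorm (fun i => xnext i - P ((n : ℝ)⁻¹ • ∑ j, xnext j)) ^ 2 ≤
      (1 - ρhat / 2) * stackNorm (fun i => x i - P ((n : ℝ)⁻¹ • ∑ j, x j)) ^ 2 +
        (16 / ρhat) * stackNorm e ^ 2 ∧
    stackNorm (fun i => xnext i - P ((n : ℝ)⁻¹ • ∑ j, xnext j)) ^ 2 ≤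
      (1 - ρhat / 2) * stackNorm (fun i => x i - P ((n : ℝ)⁻¹ • ∑ j, x j)) ^ 2 +
        (64 * γ ^ 2 / ρhat) * stackNorm (fun i => xt i - x i) ^ 2 +
        (16 * η ^ 2 / ρhat) * stackNorm v ^ 2 :=
  stmt15_general hn M R P hP hlip2 W hsymm hnn hrow γ hγ0 hγ1 η ρhat hρ0 hρ1 δ hδ0 hδR x xt v hxM
    hcontr hclose e he hebound xnext hnext
end
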